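/- The Parikh image of every language recognized by a Parikh automaton is semilinear: if L ⊆ Σ* is recognized by a PA over the finite ordered alphabet Σ = {a₁, …, aₖ}, then Φ(L) = {Φ(w) | w ∈ L} is a semilinear subset of ℕᵏ, where Φ(w) counts the occurrences of each letter in w. -/

import Mathlib

open scoped Classical

noncomputable section

/-! ### Basic word and language notions -/

/-- Number of occurrences of `b` in the list `l`. -/
def countOcc {β : Type} (l : List β) (b : β) : ℕ :=
  (l.filter fun s => decide (s = b)).length

/-- `wpow w k` is the word `w` concatenated with itself `k` times. -/
def wpow {β : Type} (w : List β) : ℕ → List β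
  | 0 => []
  | k + 1 => w ++ wpow w k

/-- The word `w₁^{k₁} ⋯ wₙ^{kₙ}`. -/
def socProd {β : Type} {n : ℕ} (w : Fin n → List β) (k : Fin n → ℕ) : List β :=
  (List.ofFn fun i => wpow (w i) (k i)).flatten

/-- `w₁, …, wₙ` is a socle of `L`: the `wᵢ` are nonempty and `L ⊆ w₁* ⋯ wₙ*`. -/
def IsSocle {β : Type} {n : ℕ} (L : Set (List β)) (w : Fin n → List β) : Prop :=
  (∀ i, w i ≠ []) ∧ ∀ x ∈ L, ∃ k : Fin n → ℕ, x = socProd w k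

/-- A language is bounded if it has a socle. -/
def BoundedLang {β : Type} (L : Set (List β)) : Prop :=
  ∃ (n : ℕ) (w : Fin n → List β), 0 < n ∧ IsSocle L w

/-- The iteration set of `L` w.r.t. the socle `w`. -/
def IterSet {β : Type} {n : ℕ} (L : Set (List β)) (w : Fin n → List β) :
    Set (Fin n → ℕ) :=
  {k | socProd w k ∈ L}

/-- Concatenation of two languages. -/
def catLang {β : Type} (X Y : Set (List β)) : Set (List β) :=
  {w | ∃ x ∈ X, ∃ y ∈ Y, w = x ++ y}

/-- The language `z* = {z^k | k ∈ ℕ}` of powers of a single word. -/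
def starWord {β : Type} (z : List β) : Set (List β) :=
  {w | ∃ k : ℕ, w = wpow z k}

/-- Kleene star of a language. -/
def starLang {β : Type} (K : Set (List β)) : Set (List β) :=
  {w | ∃ l : List (List β), (∀ u ∈ l, u ∈ K) ∧ w = l.flatten}

/-! ### Semilinear sets -/

/-- `C ⊆ ℕ^ι` is linear: `C = c + P*` for a finite `P`. -/
def IsLinearSetNat {ι : Type} (C : Set (ι → ℕ)) : Prop :=
  ∃ (c : ι → ℕ) (P : Set (ι → ℕ)), P.Finite ∧
    C = {x | ∃ p ∈ AddSubmonoid.closure P, x = c + p}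

/-- `C ⊆ ℕ^ι` is semilinear: a finite union of linear sets. -/
def IsSemilinearSetNat {ι : Type} (C : Set (ι → ℕ)) : Prop :=
  ∃ S : Set (Set (ι → ℕ)), S.Finite ∧ (∀ D ∈ S, IsLinearSetNat D) ∧ C = ⋃₀ S

/-- `L` is a bounded semilinear language: it has a socle whose iteration set is
semilinear. -/
def InBSL {β : Type} (L : Set (List β)) : Prop :=
  ∃ (n : ℕ) (w : Fin n → List β), 0 < n ∧ IsSocle L w ∧ IsSemilinearSetNat (IterSet L w)

/-! ### Finite automata, paths, runs -/

/-- A (nondeterministic) finite automaton with a single initial state, a set of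
final states and a finite set of transitions. -/
structure FinAut (α : Type) where
  σ : Type
  [finσ : Fintype σ]
  init : σ
  accept : Set σ
  δ : Set (σ × α × σ)
  finδ : δ.Finite

namespace FinAut

variable {α : Type}

/-- The type of transitions of `A`. -/
def Trans (A : FinAut α) : Type := {t : A.σ × α × A.σ // t ∈ A.δ}

def src {A : FinAut α} (t : A.Trans) : A.σ := t.1.1
def lbl {A : FinAut α} (t : A.Trans) : α := t.1.2.1
def tgt {A : FinAut α} (t : A.Trans) : A.σ := t.1.2.2

/-- `A.Steps q π r` holds when `π` is a path from state `q` to state `r`. -/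
inductive Steps (A : FinAut α) : A.σ → List A.Trans → A.σ → Prop
  | nil (q : A.σ) : Steps A q [] q
  | cons {q r : A.σ} {t : A.Trans} {π : List A.Trans} :
      src t = q → Steps A (tgt t) π r → Steps A q (t :: π) r

/-- The set of accepting paths of `A`, as a language over the transition set. -/
def Run (A : FinAut α) : Set (List A.Trans) :=
  {π | ∃ f ∈ A.accept, A.Steps A.init π f}

/-- The language of `A`: labels of accepting paths. -/
def lang (A : FinAut α) : Set (List α) :=
  {w | ∃ π ∈ A.Run, w = π.map lbl}

/-- `A` is deterministic. -/
def Deterministic (A : FinAut α) : Prop :=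
  ∀ ⦃p : A.σ⦄ ⦃a : α⦄ ⦃q q' : A.σ⦄, (p, a, q) ∈ A.δ → (p, a, q') ∈ A.δ → q = q'

/-- The Parikh image of a path: how many times each transition occurs. -/
def pathCount {A : FinAut α} (π : List A.Trans) : A.Trans → ℕ :=
  fun t => countOcc π t

/-- `A` is flat: it consists of a spine of states `q 0, …, q n` (`q 0` initial,
`q n` final, exactly one transition from `q i` to `q (i+1)` given by the label
`sl i`), together with, for at most one pair `lo k ≤ hi k` each, a back-path of
fresh states from `q (hi k)` to `q (lo k)`; the endpoints of distinct
back-paths are not strictly inside one another (no nested loops). -/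
def Flat (A : FinAut α) : Prop :=
  ∃ (n : ℕ) (q : Fin (n + 1) → A.σ) (sl : Fin n → α) (m : ℕ)
    (lo hi : Fin m → Fin (n + 1)) (fresh : Fin m → List A.σ) (bl : Fin m → List α),
    Function.Injective q ∧
    A.init = q 0 ∧
    A.accept = {q (Fin.last n)} ∧
    (∀ k, lo k ≤ hi k) ∧
    (∀ k k', k ≠ k' → (lo k, hi k) ≠ (lo k', hi k')) ∧
    (∀ k k', k ≠ k' →
      ¬(lo k < lo k' ∧ lo k' < hi k) ∧ ¬(lo k < hi k' ∧ hi k' < hi k)) ∧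
    (∀ k, (fresh k).Nodup) ∧
    (∀ k i, q i ∉ fresh k) ∧
    (∀ k k', k ≠ k' → ∀ s ∈ fresh k, s ∉ fresh k') ∧
    (∀ s : A.σ, (∃ i, s = q i) ∨ ∃ k, s ∈ fresh k) ∧
    (∀ k, (bl k).length = (fresh k).length + 1) ∧
    A.δ = {t | (∃ i : Fin n, t = (q i.castSucc, sl i, q i.succ)) ∨
        (∃ (k : Fin m) (j : ℕ) (s s' : A.σ) (a : α),
          (q (hi k) :: (fresh k ++ [q (lo k)]))[j]? = some s ∧
          (bl k)[j]? = some a ∧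
          (q (hi k) :: (fresh k ++ [q (lo k)]))[j + 1]? = some s' ∧
          t = (s, a, s'))}

end FinAut

/-! ### ε-automata -/

/-- The language of an ε-automaton (transitions labelled by `Option α`, where
`none` stands for ε): labels of accepting paths, erasing ε. -/
def epsLang {α : Type} (A : FinAut (Option α)) : Set (List α) :=
  {w | ∃ π ∈ A.Run, w = π.filterMap FinAut.lbl}

/-! ### Constrained automata -/

/-- The language of the constrained automaton `(A, C)`. -/
def CALang {α : Type} (A : FinAut α) (C : Set (A.Trans → ℕ)) : Set (List α) :=
  {w | ∃ π ∈ A.Run, FinAut.pathCount π ∈ C ∧ w = π.map FinAut.lbl}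

/-- The language of the ε-constrained automaton `(A, C)`. -/
def EpsCALang {α : Type} (A : FinAut (Option α)) (C : Set (A.Trans → ℕ)) :
    Set (List α) :=
  {w | ∃ π ∈ A.Run, FinAut.pathCount π ∈ C ∧ w = π.filterMap FinAut.lbl}

def RecByCA {α : Type} (L : Set (List α)) : Prop :=
  ∃ (A : FinAut α) (C : Set (A.Trans → ℕ)), IsSemilinearSetNat C ∧ CALang A C = L

def RecByDetCA {α : Type} (L : Set (List α)) : Prop :=
  ∃ (A : FinAut α) (C : Set (A.Trans → ℕ)),
    A.Deterministic ∧ IsSemilinearSetNat C ∧ CALang A C = L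

def RecByEpsCA {α : Type} (L : Set (List α)) : Prop :=
  ∃ (A : FinAut (Option α)) (C : Set (A.Trans → ℕ)),
    IsSemilinearSetNat C ∧ EpsCALang A C = L

/-- `L` is a finite union of languages of flat deterministic constrained
automata. -/
def FlatDetCAUnion {α : Type} (L : Set (List α)) : Prop :=
  ∃ (m : ℕ) (A : Fin m → FinAut α) (C : ∀ b, Set ((A b).Trans → ℕ)),
    (∀ b, (A b).Flat) ∧ (∀ b, (A b).Deterministic) ∧
    (∀ b, IsSemilinearSetNat (C b)) ∧ L = ⋃ b, CALang (A b) (C b)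

/-! ### Parikh automata -/

/-- Projection of a word over `Σ × ℕ^d` on `Σ`. -/
def PsiW {α : Type} {d : ℕ} (ω : List (α × (Fin d → ℕ))) : List α :=
  ω.map Prod.fst

/-- Extended Parikh image: the sum of the vector components. -/
def PhiTilde {α : Type} {d : ℕ} (ω : List (α × (Fin d → ℕ))) : Fin d → ℕ :=
  (ω.map Prod.snd).sum

/-- The language of the Parikh automaton `(A, C)`.  (Note that the set `D` of
vectors appearing on transitions of `A` is automatically finite, since the
transition set of `A` is finite.) -/
def PALang {α : Type} {d : ℕ} (A : FinAut (α × (Fin d → ℕ))) (C : Set (Fin d → ℕ)) :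
    Set (List α) :=
  {w | ∃ ω ∈ A.lang, PhiTilde ω ∈ C ∧ w = PsiW ω}

/-- Determinism for Parikh automata: at most one pair `(v, q')` for each state
`q` and letter `a`. -/
def PADet {α : Type} {d : ℕ} (A : FinAut (α × (Fin d → ℕ))) : Prop :=
  ∀ ⦃p : A.σ⦄ ⦃a : α⦄ ⦃v v' : Fin d → ℕ⦄ ⦃q q' : A.σ⦄,
    (p, (a, v), q) ∈ A.δ → (p, (a, v'), q') ∈ A.δ → v = v' ∧ q = q'

def RecByPA {α : Type} (L : Set (List α)) : Prop :=
  ∃ (d : ℕ) (A : FinAut (α × (Fin d → ℕ))) (C : Set (Fin d → ℕ)),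
    IsSemilinearSetNat C ∧ PALang A C = L

def RecByDetPA {α : Type} (L : Set (List α)) : Prop :=
  ∃ (d : ℕ) (A : FinAut (α × (Fin d → ℕ))) (C : Set (Fin d → ℕ)),
    PADet A ∧ IsSemilinearSetNat C ∧ PALang A C = L

/-! ### Affine Parikh automata -/

/-- Apply the affine functions `x ↦ M t * x + v t` of the transitions of a path,
in order (first transition first). -/
def pathApply {α : Type} {d : ℕ} (A : FinAut α) (M : A.Trans → Matrix (Fin d) (Fin d) ℕ)
    (v : A.Trans → Fin d → ℕ) : List A.Trans → (Fin d → ℕ) → (Fin d → ℕ)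
  | [], x => x
  | t :: π, x => pathApply A M v π ((M t).mulVec x + v t)

/-- The language of the affine Parikh automaton `(A, U, C)`, where the affine
function attached to transition `t` is `x ↦ M t * x + v t`. -/
def APALang {α : Type} {d : ℕ} (A : FinAut α) (M : A.Trans → Matrix (Fin d) (Fin d) ℕ)
    (v : A.Trans → Fin d → ℕ) (C : Set (Fin d → ℕ)) : Set (List α) :=
  {w | ∃ π ∈ A.Run, pathApply A M v π 0 ∈ C ∧ w = π.map FinAut.lbl}

/-- The monoid of the APA: the multiplicative matrix monoid generated by the
matrices of the transitions. -/
def APAMonoid {α : Type} {d : ℕ} (A : FinAut α) (M : A.Trans → Matrix (Fin d) (Fin d) ℕ) :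
    Set (Matrix (Fin d) (Fin d) ℕ) :=
  (Submonoid.closure (Set.range M) : Submonoid (Matrix (Fin d) (Fin d) ℕ))

/-! ### Semilinear regular expressions -/

/-- The language `y₀ x₁* y₁ ⋯ xₙ* yₙ` of a branch of an SLRE. -/
def branchLang {β : Type} {n : ℕ} (y : Fin (n + 1) → List β) (x : Fin n → List β) :
    Set (List β) :=
  {w | ∃ k : Fin n → ℕ,
    w = y 0 ++ (List.ofFn fun i : Fin n => wpow (x i) (k i) ++ y i.succ).flatten}

end

/-! The Parikh vector of a word of the PA language is a linear image of the transition count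
vector of an accepting run, and the constraint `Φ̃ ∈ C` pulls back along another linear map.
Transition counts of runs form a semilinear set by Kleene's state elimination: paths from `p`
to `q` through the states `S ∪ {r}` are those through `S`, or split as
`(p → r) (r → r)* (r → q)` with segments through `S`, and the star of the loops becomes an
additive closure. Semilinear sets are closed under intersection and linear preimages and
images. -/

open Set Pointwise

theorem isLinearSetNat_iff {ι : Type} {C : Set (ι → ℕ)} : IsLinearSetNat C ↔ IsLinearSet C := by
  simp [IsLinearSetNat, IsLinearSet, Set.ext_iff, Set.mem_vadd_set, eq_comm]

theorem isSemilinearSetNat_iff {ι : Type} {C : Set (ι → ℕ)} :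
    IsSemilinearSetNat C ↔ IsSemilinearSet C := by
  simp only [IsSemilinearSetNat, IsSemilinearSet, isLinearSetNat_iff]

section countOcc

variable {β : Type}

theorem countOcc_nil : countOcc ([] : List β) = 0 := rfl

theorem countOcc_cons (a : β) (l : List β) : countOcc (a :: l) = Pi.single a 1 + countOcc l := by
  funext b
  by_cases h : a = b <;> simp [countOcc, h, eq_comm, add_comm]

theorem countOcc_append (l₁ l₂ : List β) : countOcc (l₁ ++ l₂) = countOcc l₁ + countOcc l₂ := by
  funext b
  simp [countOcc, List.filter_append]

theorem countOcc_map {γ : Type} (f : β → γ) (l : List β) (c : γ) :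
    countOcc (l.map f) c = (l.map fun b => if f b = c then 1 else 0).sum := by
  induction l with
  | nil => rfl
  | cons a l ih => simp [countOcc_cons, Pi.single_apply, ih, eq_comm]

theorem linearCombination_countOcc {M : Type} [AddCommMonoid M] [Fintype β] (v : β → M)
    (l : List β) : Fintype.linearCombination ℕ v (countOcc l) = (l.map v).sum := by
  induction l with
  | nil => simp [countOcc_nil]
  | cons a l ih => simp [countOcc_cons, ih]

end countOcc

namespace FinAut

variable {α : Type}

instance (A : FinAut α) : Fintype A.σ := A.finσ

noncomputable instance (A : FinAut α) : Fintype A.Trans := A.finδ.fintype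

def pathsVia (A : FinAut α) (S : Set A.σ) (p q : A.σ) : Set (List A.Trans) :=
  {π | A.Steps p π q ∧ ∀ t ∈ π.tail, src t ∈ S}

def parikhVia (A : FinAut α) (S : Set A.σ) (p q : A.σ) : Set (A.Trans → ℕ) :=
  pathCount '' A.pathsVia S p q

variable {A : FinAut α}

theorem Steps.append {p r q : A.σ} {π₁ π₂ : List A.Trans} (h₁ : A.Steps p π₁ r)
    (h₂ : A.Steps r π₂ q) : A.Steps p (π₁ ++ π₂) q := by
  induction h₁ with
  | nil => exact h₂
  | cons hsrc _ ih => exact .cons hsrc (ih h₂)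

@[simp]
theorem pathCount_nil : pathCount ([] : List A.Trans) = 0 := rfl

theorem pathCount_append (π₁ π₂ : List A.Trans) :
    pathCount (π₁ ++ π₂) = pathCount π₁ + pathCount π₂ :=
  countOcc_append π₁ π₂

theorem linearCombination_pathCount {M : Type} [AddCommMonoid M] (v : A.Trans → M)
    (π : List A.Trans) : Fintype.linearCombination ℕ v (pathCount π) = (π.map v).sum :=
  linearCombination_countOcc v π

theorem parikhVia_mono {S S' : Set A.σ} (h : S ⊆ S') (p q : A.σ) :
    A.parikhVia S p q ⊆ A.parikhVia S' p q :=
  image_mono fun _ ⟨hst, hmid⟩ => ⟨hst, fun t ht => h (hmid t ht)⟩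

theorem zero_mem_parikhVia (S : Set A.σ) (p : A.σ) : 0 ∈ A.parikhVia S p p :=
  ⟨[], ⟨.nil p, by simp⟩, pathCount_nil⟩

theorem single_mem_parikhVia (S : Set A.σ) (t : A.Trans) :
    pathCount [t] ∈ A.parikhVia S (src t) (tgt t) :=
  ⟨[t], ⟨.cons rfl (.nil _), by simp⟩, rfl⟩

theorem add_mem_parikhVia {S : Set A.σ} {p r q : A.σ} {x y : A.Trans → ℕ}
    (hx : x ∈ A.parikhVia S p r) (hy : y ∈ A.parikhVia S r q) (hr : r ∈ S) :
    x + y ∈ A.parikhVia S p q := by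
  obtain ⟨π₁, ⟨hst₁, hmid₁⟩, rfl⟩ := hx
  obtain ⟨π₂, ⟨hst₂, hmid₂⟩, rfl⟩ := hy
  refine ⟨π₁ ++ π₂, ⟨hst₁.append hst₂, fun t ht => ?_⟩, pathCount_append π₁ π₂⟩
  rcases π₁ with _ | ⟨t₁, π₁⟩
  · exact hmid₂ t (by simpa using ht)
  rcases List.mem_append.1 ht with ht | ht
  · exact hmid₁ t ht
  cases hst₂ with
  | nil => simp at ht
  | cons hsrc _ =>
    rcases List.mem_cons.1 ht with rfl | ht
    · exact hsrc ▸ hr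
    · exact hmid₂ t ht

theorem parikhVia_empty_subset (p q : A.σ) :
    A.parikhVia ∅ p q ⊆ insert 0 (range fun t => pathCount [t]) := by
  rintro _ ⟨π, ⟨-, hmid⟩, rfl⟩
  match π, hmid with
  | [], _ => exact Or.inl pathCount_nil
  | [t], _ => exact Or.inr ⟨t, rfl⟩
  | _ :: u :: _, hmid => exact absurd (hmid u (by simp)) (by simp)

theorem parikhVia_insert_subset (S : Set A.σ) (r : A.σ) {p q : A.σ} {π : List A.Trans}
    (hπ : π ∈ A.pathsVia (insert r S) p q) :
    pathCount π ∈ A.parikhVia S p q ∪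
      (A.parikhVia S p r + AddSubmonoid.closure (A.parikhVia S r r) + A.parikhVia S r q) := by
  induction π generalizing p with
  | nil => exact Or.inl ⟨[], ⟨hπ.1, by simp⟩, rfl⟩
  | cons t π ih =>
    obtain ⟨hst, hmid⟩ := hπ
    cases hst with | cons hsrc hrest =>
    subst hsrc
    have ht := single_mem_parikhVia S t
    rw [← List.singleton_append, pathCount_append]
    cases π with
    | nil =>
      cases hrest
      exact Or.inl (by simpa using ht)
    | cons u π =>
      have hu : tgt t ∈ insert r S := by
        cases hrest with | cons hsrc _ => exact hsrc ▸ hmid u (by simp)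
      have hrec := ih ⟨hrest, fun v hv => hmid v (List.mem_of_mem_tail hv)⟩
      generalize pathCount (u :: π) = y at hrec ⊢
      -- When `t` enters `r` it is a whole `p → r` segment, and a first `r → r` segment
      -- of the rest becomes a loop.
      rcases hu with rfl | hS <;>
        rcases hrec with hy | ⟨_, ⟨x₁, hx₁, x₂, hx₂, rfl⟩, x₃, hx₃, rfl⟩
      · exact Or.inr ⟨_, ⟨_, ht, 0, zero_mem _, rfl⟩, _, hy, by simp⟩
      · refine Or.inr ⟨_, ⟨_, ht, x₁ + x₂, ?_, rfl⟩, x₃, hx₃, by simp [add_assoc]⟩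
        exact add_mem (AddSubmonoid.subset_closure hx₁) hx₂
      · exact Or.inl (add_mem_parikhVia ht hy hS)
      · refine Or.inr ⟨_, ⟨pathCount [t] + x₁, ?_, x₂, hx₂, rfl⟩, x₃, hx₃, by simp [add_assoc]⟩
        exact add_mem_parikhVia ht hx₁ hS

theorem parikhVia_insert (S : Set A.σ) (r p q : A.σ) :
    A.parikhVia (insert r S) p q = A.parikhVia S p q ∪
      (A.parikhVia S p r + AddSubmonoid.closure (A.parikhVia S r r) + A.parikhVia S r q) := by
  have hS : S ⊆ insert r S := subset_insert r S
  refine Subset.antisymm (fun _ ⟨π, hπ, hx⟩ => hx ▸ parikhVia_insert_subset S r hπ) ?_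
  rintro _ (hx | ⟨_, ⟨x₁, hx₁, x₂, hx₂, rfl⟩, x₃, hx₃, rfl⟩)
  · exact parikhVia_mono hS p q hx
  have hloop : x₂ ∈ A.parikhVia (insert r S) r r := by
    induction hx₂ using AddSubmonoid.closure_induction with
    | mem x hx => exact parikhVia_mono hS r r hx
    | zero => exact zero_mem_parikhVia _ r
    | add x y _ _ hx hy => exact add_mem_parikhVia hx hy (mem_insert r S)
  exact add_mem_parikhVia (add_mem_parikhVia (parikhVia_mono hS p r hx₁) hloop (mem_insert r S))
    (parikhVia_mono hS r q hx₃) (mem_insert r S)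

theorem isSemilinearSet_parikhVia (S : Set A.σ) (p q : A.σ) :
    IsSemilinearSet (A.parikhVia S p q) := by
  induction S, toFinite S using Set.Finite.induction_on generalizing p q with
  | empty => exact .of_finite (((finite_range _).insert 0).subset (parikhVia_empty_subset p q))
  | insert _ _ ih =>
    rw [parikhVia_insert]
    exact (ih p q).union (((ih _ _).add (ih _ _).closure).add (ih _ _))

theorem image_pathCount_run_eq (A : FinAut α) :
    pathCount '' A.Run = ⋃ f ∈ A.accept, A.parikhVia univ A.init f := by
  ext x
  simp only [Run, parikhVia, pathsVia, mem_univ, implies_true, and_true, mem_image,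
    mem_iUnion, mem_ofPred_eq, exists_prop]
  exact ⟨fun ⟨π, ⟨f, hf, h⟩, hx⟩ => ⟨f, hf, π, h, hx⟩, fun ⟨f, hf, π, h, hx⟩ => ⟨π, ⟨f, hf, h⟩, hx⟩⟩

theorem isSemilinearSet_image_pathCount_run (A : FinAut α) :
    IsSemilinearSet (pathCount '' A.Run) := by
  rw [image_pathCount_run_eq]
  exact .biUnion (toFinite _) fun f _ => isSemilinearSet_parikhVia _ _ _

end FinAut

section ParikhAutomaton

open FinAut

variable {α : Type} {d : ℕ} (A : FinAut (α × (Fin d → ℕ)))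

theorem phiTilde_map_lbl (π : List A.Trans) :
    PhiTilde (π.map lbl) = Fintype.linearCombination ℕ (fun t => (lbl t).2) (pathCount π) := by
  rw [PhiTilde, List.map_map, linearCombination_pathCount]
  rfl

theorem countOcc_psiW_map_lbl {k : ℕ} (e : α ≃ Fin k) (π : List A.Trans) :
    (fun i => countOcc (PsiW (π.map lbl)) (e.symm i)) =
      Fintype.linearCombination ℕ (fun t i => if (lbl t).1 = e.symm i then 1 else 0)
        (pathCount π) := by
  funext i
  rw [PsiW, List.map_map, countOcc_map, linearCombination_pathCount, Pi.list_sum_apply,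
    List.map_map]
  rfl

theorem parikh_paLang_eq_image {k : ℕ} (e : α ≃ Fin k) (C : Set (Fin d → ℕ)) :
    {x : Fin k → ℕ | ∃ w ∈ PALang A C, x = fun i => countOcc w (e.symm i)} =
      Fintype.linearCombination ℕ (fun t i => if (lbl t).1 = e.symm i then 1 else 0) ''
        (pathCount '' A.Run ∩ Fintype.linearCombination ℕ (fun t => (lbl t).2) ⁻¹' C) := by
  ext x
  constructor
  · rintro ⟨_, ⟨_, ⟨π, hπ, rfl⟩, hC, rfl⟩, rfl⟩
    exact ⟨pathCount π, ⟨mem_image_of_mem _ hπ, by rwa [mem_preimage, ← phiTilde_map_lbl]⟩,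
      (countOcc_psiW_map_lbl A e π).symm⟩
  · rintro ⟨_, ⟨⟨π, hπ, rfl⟩, hC⟩, rfl⟩
    exact ⟨_, ⟨_, ⟨π, hπ, rfl⟩, by rwa [phiTilde_map_lbl], rfl⟩,
      (countOcc_psiW_map_lbl A e π).symm⟩

end ParikhAutomaton

/-- The Parikh image of every PA language is semilinear: for
a finite ordered alphabet `Σ = {a₁, …, aₖ}` (given by the equivalence `e`), the
set of Parikh images of the words of a PA language is a semilinear subset of
`ℕ^k`. -/
theorem pa_parikh_semilinear {α : Type} {k : ℕ} (e : α ≃ Fin k)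
    (L : Set (List α)) (h : RecByPA L) :
    IsSemilinearSetNat {x : Fin k → ℕ | ∃ w ∈ L, x = fun i => countOcc w (e.symm i)} := by
  obtain ⟨d, A, C, hC, rfl⟩ := h
  rw [isSemilinearSetNat_iff] at hC ⊢
  rw [parikh_paLang_eq_image A e C]
  exact (A.isSemilinearSet_image_pathCount_run.inter (hC.preimage _)).image _
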